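/- arXiv:2602.15710 — 3 statements merged into one kernel-verified Lean document; each statement's English description precedes it below -/
import Mathlib

section
/- Affine lower bound for Bregman distances on compact sets: if Φ is Legendre and C ⊂ int(dom Φ) is compact, then there exist r > 0 and δ < ∞ such that D_Φ(x, y) ≥ r‖x‖ − δ for every x ∈ dom Φ and every y ∈ C. -/
open scoped RealInnerProductSpace

/-- Bregman distance generated by `Φ` with gradient map `gΦ`. -/
noncomputable def bregman {E : Type*} [NormedAddCommGroup E] [InnerProductSpace ℝ E]
    (Φ : E → ℝ) (gΦ : E → E) (x y : E) : ℝ :=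
  Φ x - Φ y - ⟪gΦ y, x - y⟫

/-- Affine lower bound for Bregman distances on compact sets: if `Φ` is Legendre
(with conjugate `Φs` continuous on the open interior of its domain `Ss`, gradient
map `gΦ` continuous on `int S` and mapping the compact set `C ⊆ int S` into
`int Ss`, satisfying the Fenchel–Young inequality and the Fenchel equality at
gradient pairs), then there exist `r > 0` and `δ < ∞` such that
`D_Φ(x, y) ≥ r‖x‖ − δ` for every `x ∈ dom Φ` and every `y ∈ C`. -/
theorem stmt2 {E : Type*} [NormedAddCommGroup E] [InnerProductSpace ℝ E]
    [FiniteDimensional ℝ E]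
    (S Ss : Set E) (Φ Φs : E → ℝ) (gΦ : E → E)
    (hSsopen : IsOpen (interior Ss))
    (hΦscont : ContinuousOn Φs (interior Ss))
    (hgcont : ContinuousOn gΦ (interior S))
    (C : Set E) (hC : IsCompact C) (hCsub : C ⊆ interior S)
    (himg : gΦ '' C ⊆ interior Ss)
    (hFY : ∀ x ∈ S, ∀ zs ∈ Ss, ⟪x, zs⟫ ≤ Φ x + Φs zs)
    (hFYeq : ∀ y ∈ C, Φ y + Φs (gΦ y) = ⟪y, gΦ y⟫)
    (hSssub : interior Ss ⊆ Ss) :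
    ∃ r > (0:ℝ), ∃ δ : ℝ, ∀ x ∈ S, ∀ y ∈ C, r * ‖x‖ - δ ≤ bregman Φ gΦ x y := by
  have hK : IsCompact (gΦ '' C) := hC.image_of_continuousOn (hgcont.mono hCsub)
  obtain ⟨r, hr, hrsub⟩ := hK.exists_cthickening_subset_open hSsopen himg
  have hK' : IsCompact (Metric.cthickening r (gΦ '' C)) := hK.cthickening
  obtain ⟨M, hM⟩ := hK'.exists_bound_of_continuousOn (hΦscont.mono hrsub)
  refine ⟨r, hr, 2 * M, fun x hx y hy => ?_⟩
  have hg : gΦ y ∈ gΦ '' C := ⟨y, hy, rfl⟩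
  have hgK' : gΦ y ∈ Metric.cthickening r (gΦ '' C) :=
    Metric.self_subset_cthickening _ hg
  have hMg : |Φs (gΦ y)| ≤ M := by simpa using hM _ hgK'
  have hD : bregman Φ gΦ x y = Φ x - ⟪x, gΦ y⟫ + Φs (gΦ y) := by
    have h := hFYeq y hy
    have c1 : ⟪gΦ y, x⟫ = ⟪x, gΦ y⟫ := real_inner_comm _ _
    have c2 : ⟪gΦ y, y⟫ = ⟪y, gΦ y⟫ := real_inner_comm _ _
    simp only [bregman, inner_sub_right]
    linarith
  rcases eq_or_ne x 0 with rfl | hx0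
  · have h0 := hFY 0 hx (gΦ y) (hSssub (hrsub hgK'))
    simp only [inner_zero_left] at h0
    have : (0:ℝ) ≤ M := le_trans (abs_nonneg _) hMg
    rw [hD]
    simp only [inner_zero_left, norm_zero, mul_zero]
    have := abs_le.mp hMg
    linarith
  · set z := gΦ y + r • (‖x‖⁻¹ • x) with hz
    have hnx : ‖x‖ ≠ 0 := norm_ne_zero_iff.mpr hx0
    have hzd : dist z (gΦ y) ≤ r := by
      rw [dist_eq_norm]
      simp [hz, norm_smul, abs_of_pos hr, abs_inv, inv_mul_cancel₀ hnx, le_refl]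
    have hzK' : z ∈ Metric.cthickening r (gΦ '' C) :=
      Metric.mem_cthickening_of_dist_le z (gΦ y) r _ hg hzd
    have hzSs : z ∈ Ss := hSssub (hrsub hzK')
    have hMz : |Φs z| ≤ M := by simpa using hM _ hzK'
    have hFYz := hFY x hx z hzSs
    have hiz : ⟪x, z⟫ = ⟪x, gΦ y⟫ + r * ‖x‖ := by
      rw [hz, inner_add_right, inner_smul_right, inner_smul_right,
        real_inner_self_eq_norm_sq]
      field_simp
    rw [hD]
    have h1 := abs_le.mp hMg
    have h2 := abs_le.mp hMz
    rw [hiz] at hFYz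
    linarith
end

section
/- Nonnegativity and zero characterization of the restricted gap function: let T be maximal monotone with zer T ≠ ∅. For R > 0 large enough that zer T ∩ B_R ≠ ∅ and int B_R ∩ dom T ≠ ∅, the function G_R(p) = sup_{z ∈ B_R} sup_{w ∈ T(z)} ⟨w, p − z⟩ is convex, lsc, proper, and nonnegative; moreover, for any p with ‖p‖ < R, G_R(p) = 0 if and only if 0 ∈ T(p). -/
/-!
Everything except the zero characterization is immediate from `G_R` being a supremum of affine
functions of `p`. If `G_R(p) = 0`, then `(p, 0)` is monotonically related to the part of the graph
of `T` lying over `B_R`, and the point is to upgrade this to the whole graph. For that we solve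
`p ∈ z + T z + N_{B_R}(z)`: testing the solution against `(p, 0)` forces `z = p`, and the
normal vector vanishes because `p` is interior. The inclusion is solved as a limit of the penalized
inclusions `p ∈ z + T z + n (z - proj_{B_R} z)`, which are solvable by Minty's theorem and whose
solutions stay bounded thanks to a point of `dom T` interior to `B_R`. Minty's theorem is proved
through a Kirszbraun-type one-point extension of the nonexpansive map `x + w ↦ x - w` on the
graph of `T`, which in finite dimensions reduces by compactness to finitely many points.
-/

open scoped RealInnerProductSpace

/-- A set-valued operator `T : E ⇉ E` is monotone. -/
def MonotoneOp {E : Type*} [NormedAddCommGroup E] [InnerProductSpace ℝ E]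
    (T : E → Set E) : Prop :=
  ∀ ⦃x y x' y' : E⦄, x' ∈ T x → y' ∈ T y → 0 ≤ ⟪x - y, x' - y'⟫

/-- A set-valued operator `T : E ⇉ E` is maximal monotone: it is monotone, and
any point monotonically related to the whole graph belongs to the graph. -/
def MaximalMonotoneOp {E : Type*} [NormedAddCommGroup E] [InnerProductSpace ℝ E]
    (T : E → Set E) : Prop :=
  MonotoneOp T ∧ ∀ z w : E, (∀ x x' : E, x' ∈ T x → 0 ≤ ⟪z - x, w - x'⟫) → w ∈ T z

/-- The restricted gap function `G_R(p) = sup_{z ∈ B_R} sup_{w ∈ T z} ⟨w, p − z⟩`,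
valued in the extended reals. -/
noncomputable def restrictedGap {E : Type*} [NormedAddCommGroup E]
    [InnerProductSpace ℝ E] (T : E → Set E) (R : ℝ) (p : E) : EReal :=
  ⨆ z ∈ Metric.closedBall (0:E) R, ⨆ w ∈ T z, ((⟪w, p - z⟫ : ℝ) : EReal)

open Filter Topology

section Kirszbraun

variable {E : Type*} [NormedAddCommGroup E] [InnerProductSpace ℝ E] {ι : Type*}

theorem sum_sum_mul_norm_sub_sq (t : Finset ι) {w : ι → ℝ} (hw : ∑ i ∈ t, w i = 1)
    (a : ι → E) (x : E) :
    ∑ i ∈ t, ∑ j ∈ t, w i * w j * ‖a i - a j‖ ^ 2 =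
      2 * ∑ i ∈ t, w i * ‖x - a i‖ ^ 2 - 2 * ‖x - ∑ i ∈ t, w i • a i‖ ^ 2 := by
  set b : ι → E := fun i => x - a i
  have hx : x - ∑ i ∈ t, w i • a i = ∑ i ∈ t, w i • b i := by
    simp only [b, smul_sub, Finset.sum_sub_distrib, ← Finset.sum_smul, hw, one_smul]
  have hsq : ‖∑ i ∈ t, w i • b i‖ ^ 2 = ∑ i ∈ t, ∑ j ∈ t, w i * w j * ⟪b i, b j⟫ := by
    simp only [← real_inner_self_eq_norm_sq, sum_inner, inner_sum, real_inner_smul_left,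
      real_inner_smul_right, mul_assoc]
    rw [Finset.sum_comm]
    exact Finset.sum_congr rfl fun i _ => Finset.sum_congr rfl fun j _ => by
      rw [real_inner_comm]; ring
  have hab : ∀ i j, ‖a i - a j‖ ^ 2 = ‖b i‖ ^ 2 - 2 * ⟪b i, b j⟫ + ‖b j‖ ^ 2 := fun i j => by
    rw [← norm_sub_sq_real, norm_sub_rev]; congr 2; simp only [b]; abel
  rw [hx, hsq]
  simp only [hab, mul_add, mul_sub, Finset.sum_add_distrib, Finset.sum_sub_distrib]
  rw [Finset.sum_comm (f := fun i j => w i * w j * ‖b j‖ ^ 2)]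
  simp only [b, mul_comm (w _) (w _), mul_assoc, ← Finset.mul_sum, ← Finset.sum_mul, hw]
  simp only [one_mul, mul_left_comm _ (2 : ℝ), ← Finset.mul_sum]
  ring

theorem sum_mul_norm_sum_smul_sub_sq_le (t : Finset ι) {w : ι → ℝ} (hw₀ : ∀ i ∈ t, 0 ≤ w i)
    (hw₁ : ∑ i ∈ t, w i = 1) {a b : ι → E} (hab : ∀ i ∈ t, ∀ j ∈ t, ‖a i - a j‖ ≤ ‖b i - b j‖)
    (y : E) : ∑ i ∈ t, w i * ‖∑ j ∈ t, w j • a j - a i‖ ^ 2 ≤ ∑ i ∈ t, w i * ‖y - b i‖ ^ 2 := by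
  have hsum : ∑ i ∈ t, ∑ j ∈ t, w i * w j * ‖a i - a j‖ ^ 2 ≤
      ∑ i ∈ t, ∑ j ∈ t, w i * w j * ‖b i - b j‖ ^ 2 :=
    Finset.sum_le_sum fun i hi => Finset.sum_le_sum fun j hj =>
      mul_le_mul_of_nonneg_left (pow_le_pow_left₀ (norm_nonneg _) (hab i hi j hj) 2)
        (mul_nonneg (hw₀ i hi) (hw₀ j hj))
  rw [sum_sum_mul_norm_sub_sq t hw₁ a (∑ j ∈ t, w j • a j),
    sum_sum_mul_norm_sub_sq t hw₁ b y, sub_self, norm_zero] at hsum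
  nlinarith [sq_nonneg ‖y - ∑ i ∈ t, w i • b i‖]

variable [FiniteDimensional ℝ E]

-- `hv` and `hmin` say that `v` minimises `max_i (‖· - f i‖ ^ 2 - c i)`, with minimum `M`.
theorem mem_convexHull_of_forall_exists_le [Finite ι] (f : ι → E) (c : ι → ℝ) {v : E} {M : ℝ}
    (hv : ∀ i, ‖v - f i‖ ^ 2 - c i ≤ M) (hmin : ∀ u, ∃ i, M ≤ ‖u - f i‖ ^ 2 - c i) :
    v ∈ convexHull ℝ (f '' {i | ‖v - f i‖ ^ 2 - c i = M}) := by
  -- otherwise a direction `d` separating `v` from the active points decreases every term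
  by_contra hvK
  obtain ⟨ℓ, r, hℓv, hℓK⟩ := geometric_hahn_banach_point_closed (convex_convexHull ℝ _)
    ((Set.toFinite _).isClosed_convexHull ℝ) hvK
  set d := (InnerProductSpace.toDual ℝ E).symm ℓ
  have hexpand : ∀ i (t : ℝ), ‖v + t • d - f i‖ ^ 2 - c i =
      ‖v - f i‖ ^ 2 - c i - t * (2 * ⟪d, f i - v⟫ - t * ‖d‖ ^ 2) := fun i t => by
    rw [show v + t • d - f i = (v - f i) + t • d by abel, norm_add_sq_real, norm_smul,
      real_inner_smul_right, mul_pow, Real.norm_eq_abs, sq_abs, real_inner_comm,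
      ← neg_sub (f i) v, inner_neg_right]
    ring
  have hdecrease : ∀ i, ∀ᶠ t in 𝓝[>] (0 : ℝ), ‖v + t • d - f i‖ ^ 2 - c i < M := by
    intro i
    rcases (hv i).lt_or_eq with hlt | heq
    · refine Tendsto.eventually_lt_const hlt (Tendsto.mono_left ?_ nhdsWithin_le_nhds)
      exact (by fun_prop : Continuous fun t : ℝ => ‖v + t • d - f i‖ ^ 2 - c i).tendsto' 0 _
        (by simp)
    · have hpos : 0 < 2 * ⟪d, f i - v⟫ := by
        have := hℓK (f i) (subset_convexHull ℝ _ (Set.mem_image_of_mem f heq))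
        rw [inner_sub_right, InnerProductSpace.toDual_symm_apply,
          InnerProductSpace.toDual_symm_apply]
        linarith
      have hsmall : ∀ᶠ t in 𝓝[>] (0 : ℝ), t * ‖d‖ ^ 2 < 2 * ⟪d, f i - v⟫ :=
        Tendsto.eventually_lt_const hpos (Tendsto.mono_left
          ((by fun_prop : Continuous fun t : ℝ => t * ‖d‖ ^ 2).tendsto' 0 0 (by simp))
          nhdsWithin_le_nhds)
      filter_upwards [hsmall, self_mem_nhdsWithin] with t ht (htpos : 0 < t)
      rw [hexpand, heq]
      nlinarith
  obtain ⟨t, ht⟩ := (eventually_all.2 hdecrease).exists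
  obtain ⟨i, hi⟩ := hmin (v + t • d)
  exact (ht i).not_ge hi

-- Valentine's proof of Kirszbraun's theorem: a minimiser `v` of `max_i (‖· - f i‖² - ‖y - s i‖²)`
-- is a convex combination of active points `f i`, which forces the minimum to be `≤ 0`.
theorem exists_forall_norm_sub_le_of_finite [Finite ι] {s f : ι → E}
    (hf : ∀ i j, ‖f i - f j‖ ≤ ‖s i - s j‖) (y : E) : ∃ v, ∀ i, ‖v - f i‖ ≤ ‖y - s i‖ := by
  rcases isEmpty_or_nonempty ι with hι | hι
  · exact ⟨0, isEmptyElim⟩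
  have := Fintype.ofFinite ι
  let i₀ : ι := Classical.arbitrary ι
  set φ : E → ι → ℝ := fun u i => ‖u - f i‖ ^ 2 - ‖y - s i‖ ^ 2
  set g : E → ℝ := fun u => Finset.univ.sup' Finset.univ_nonempty (φ u)
  have hg : Continuous g := Continuous.finset_sup'_apply _ fun i _ => by fun_prop
  have hφ : Tendsto (φ · i₀) (cocompact E) atTop := by
    refine tendsto_atTop_add_const_right _ _ ((tendsto_pow_atTop two_ne_zero).comp ?_)
    refine tendsto_atTop_mono (fun u => ?_) (tendsto_atTop_add_const_right _ (-‖f i₀‖)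
      tendsto_norm_cocompact_atTop)
    linarith [norm_sub_norm_le u (f i₀)]
  obtain ⟨v, hv⟩ := hg.exists_forall_le
    (tendsto_atTop_mono (fun u => Finset.le_sup' (φ u) (Finset.mem_univ i₀)) hφ)
  have hull := mem_convexHull_of_forall_exists_le f (fun i => ‖y - s i‖ ^ 2)
    (fun i => Finset.le_sup' (φ v) (Finset.mem_univ i)) fun u => by
      obtain ⟨i, -, hi⟩ := Finset.exists_mem_eq_sup' Finset.univ_nonempty (φ u)
      exact ⟨i, (hv u).trans_eq hi⟩
  obtain ⟨κ, _, w, z, hw₀, hw₁, hz, hvz⟩ := mem_convexHull_iff_exists_fintype.1 hull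
  choose σ hσ hσz using hz
  have hkey := sum_mul_norm_sum_smul_sub_sq_le Finset.univ (fun k _ => hw₀ k) hw₁
    (a := f ∘ σ) (b := s ∘ σ) (fun k _ l _ => hf _ _) y
  have hactive : ∀ k, ‖v - z k‖ ^ 2 = g v + ‖y - s (σ k)‖ ^ 2 := fun k => by
    rw [← hσz k, ← (hσ k : φ v (σ k) = g v)]; ring
  simp only [Function.comp_apply, hσz, hvz, hactive, mul_add, Finset.sum_add_distrib,
    ← Finset.sum_mul, hw₁, one_mul] at hkey
  refine ⟨v, fun i => (sq_le_sq₀ (norm_nonneg _) (norm_nonneg _)).1 ?_⟩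
  linarith [Finset.le_sup' (φ v) (Finset.mem_univ i)]

theorem exists_forall_norm_sub_le {s f : ι → E} (hf : ∀ i j, ‖f i - f j‖ ≤ ‖s i - s j‖)
    (y : E) : ∃ v, ∀ i, ‖v - f i‖ ≤ ‖y - s i‖ := by
  classical
  rcases isEmpty_or_nonempty ι with hι | hι
  · exact ⟨0, isEmptyElim⟩
  let i₀ : ι := Classical.arbitrary ι
  obtain ⟨v, -, hv⟩ := (isCompact_closedBall (f i₀) ‖y - s i₀‖).inter_iInter_nonempty
    (fun i => Metric.closedBall (f i) ‖y - s i‖) (fun _ => Metric.isClosed_closedBall) fun t => by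
      obtain ⟨v, hv⟩ := exists_forall_norm_sub_le_of_finite (ι := ↥(insert i₀ t))
        (fun i j => hf i j) y
      refine ⟨v, mem_closedBall_iff_norm.2 (hv ⟨i₀, Finset.mem_insert_self _ _⟩),
        Set.mem_iInter₂.2 fun i hi => mem_closedBall_iff_norm.2 ?_⟩
      exact hv ⟨i, Finset.mem_insert_of_mem hi⟩
  exact ⟨v, fun i => mem_closedBall_iff_norm.1 (Set.mem_iInter.1 hv i)⟩

end Kirszbraun

section MonotoneOp

open scoped Pointwise

variable {E : Type*} [NormedAddCommGroup E] [InnerProductSpace ℝ E] {T : E → Set E}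

theorem MonotoneOp.norm_sub_le_norm_add (hT : MonotoneOp T) {x y x' y' : E} (hx : x' ∈ T x)
    (hy : y' ∈ T y) : ‖(x - x') - (y - y')‖ ≤ ‖(x + x') - (y + y')‖ := by
  have hxy := hT hx hy
  rw [← sq_le_sq₀ (norm_nonneg _) (norm_nonneg _),
    show (x - x') - (y - y') = (x - y) - (x' - y') by abel,
    show (x + x') - (y + y') = (x - y) + (x' - y') by abel, norm_sub_sq_real, norm_add_sq_real]
  linarith

theorem MaximalMonotoneOp.smul (hT : MaximalMonotoneOp T) {c : ℝ} (hc : 0 < c) :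
    MaximalMonotoneOp fun x => c • T x := by
  refine ⟨?_, fun z w h => ?_⟩
  · rintro x y _ _ ⟨x', hx', rfl⟩ ⟨y', hy', rfl⟩
    rw [← smul_sub, real_inner_smul_right]
    exact mul_nonneg hc.le (hT.1 hx' hy')
  · rw [Set.mem_smul_set_iff_inv_smul_mem₀ hc.ne']
    refine hT.2 _ _ fun x x' hx' => ?_
    have := h x (c • x') (Set.smul_mem_smul_set hx')
    rw [show c⁻¹ • w - x' = c⁻¹ • (w - c • x') by
      rw [smul_sub, inv_smul_smul₀ hc.ne'], real_inner_smul_right]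
    positivity

theorem MaximalMonotoneOp.mem_of_tendsto {α : Type*} {l : Filter α} [l.NeBot]
    (hT : MaximalMonotoneOp T) {z w : α → E} {z₀ w₀ : E} (hz : Tendsto z l (𝓝 z₀))
    (hw : Tendsto w l (𝓝 w₀)) (hzw : ∀ n, w n ∈ T (z n)) : w₀ ∈ T z₀ :=
  hT.2 _ _ fun _ _ hx' => ge_of_tendsto' ((hz.sub_const _).inner (hw.sub_const _))
    fun n => hT.1 (hzw n) hx'

variable [FiniteDimensional ℝ E]

-- Minty's theorem: extend the nonexpansive map `x + w ↦ x - w` on the graph to `y ↦ v`; then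
-- `((y + v) / 2, (y - v) / 2)` is monotonically related to the graph.
theorem MaximalMonotoneOp.exists_add_eq (hT : MaximalMonotoneOp T) (y : E) :
    ∃ z, ∃ w ∈ T z, z + w = y := by
  obtain ⟨v, hv⟩ := exists_forall_norm_sub_le (ι := {q : E × E // q.2 ∈ T q.1})
    (s := fun q => q.1.1 + q.1.2) (f := fun q => q.1.1 - q.1.2)
    (fun q r => hT.1.norm_sub_le_norm_add q.2 r.2) y
  refine ⟨(2⁻¹ : ℝ) • (y + v), (2⁻¹ : ℝ) • (y - v), hT.2 _ _ fun x x' hx => ?_, by module⟩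
  have hle : ‖v - (x - x')‖ ^ 2 ≤ ‖y - (x + x')‖ ^ 2 :=
    pow_le_pow_left₀ (norm_nonneg _) (hv ⟨(x, x'), hx⟩) 2
  have hparallelogram : ∀ a b : E,
      ⟪(2⁻¹ : ℝ) • (a + b), (2⁻¹ : ℝ) • (a - b)⟫ = 4⁻¹ * (‖a‖ ^ 2 - ‖b‖ ^ 2) := fun a b => by
    rw [real_inner_smul_left, real_inner_smul_right, inner_add_left, inner_sub_right,
      inner_sub_right, real_inner_self_eq_norm_sq, real_inner_self_eq_norm_sq, real_inner_comm a b]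
    ring
  rw [show (2⁻¹ : ℝ) • (y + v) - x = (2⁻¹ : ℝ) • ((y - (x + x')) + (v - (x - x'))) by module,
    show (2⁻¹ : ℝ) • (y - v) - x' = (2⁻¹ : ℝ) • ((y - (x + x')) - (v - (x - x'))) by module,
    hparallelogram]
  linarith

theorem MaximalMonotoneOp.exists_smul_add_eq (hT : MaximalMonotoneOp T) {c : ℝ} (hc : 0 < c)
    (y : E) : ∃ z, ∃ w ∈ T z, c • z + w = y := by
  obtain ⟨z, _, ⟨w, hw, rfl⟩, hzw⟩ := (hT.smul (inv_pos.2 hc)).exists_add_eq (c⁻¹ • y)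
  refine ⟨z, w, hw, ?_⟩
  rw [← smul_right_injective E (inv_ne_zero hc.ne') |>.eq_iff, smul_add, inv_smul_smul₀ hc.ne']
  exact hzw

theorem MaximalMonotoneOp.add_of_lipschitz (hT : MaximalMonotoneOp T) {P : E → E} {L : ℝ}
    (hL : 0 ≤ L) (hPmono : ∀ x y, 0 ≤ ⟪x - y, P x - P y⟫)
    (hPlip : ∀ x y, ‖P x - P y‖ ≤ L * ‖x - y‖) :
    MaximalMonotoneOp fun x => (· + P x) '' T x := by
  refine ⟨?_, fun q v h => ?_⟩
  · rintro x y _ _ ⟨x', hx', rfl⟩ ⟨y', hy', rfl⟩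
    rw [show x' + P x - (y' + P y) = (x' - y') + (P x - P y) by abel, inner_add_right]
    linarith [hT.1 hx' hy', hPmono x y]
  -- solve `(1 + L) z + w = v - P q + (1 + L) q`; the Lipschitz bound then forces `z = q`
  obtain ⟨z, w, hw, hzw⟩ := hT.exists_smul_add_eq (c := 1 + L) (by linarith)
    (v - P q + (1 + L) • q)
  have hw' : w = v - P q + (1 + L) • q - (1 + L) • z := eq_sub_of_add_eq' hzw
  have hrel := h z (w + P z) ⟨w, hw, rfl⟩
  rw [show v - (w + P z) = (1 + L) • (z - q) + (P q - P z) by rw [hw']; module,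
    inner_add_right, real_inner_smul_right, ← neg_sub q z, inner_neg_right,
    real_inner_self_eq_norm_sq] at hrel
  have hlip : ⟪q - z, P q - P z⟫ ≤ L * ‖q - z‖ ^ 2 := by
    nlinarith [real_inner_le_norm (q - z) (P q - P z), hPlip q z, norm_nonneg (q - z)]
  obtain rfl : q = z := sub_eq_zero.1 (norm_eq_zero.1 (by nlinarith [norm_nonneg (q - z)]))
  refine ⟨w, hw, ?_⟩
  rw [hw']
  module

end MonotoneOp

section BallProjection

variable {E : Type*} [NormedAddCommGroup E] [InnerProductSpace ℝ E] {R : ℝ}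

noncomputable def ballProj (R : ℝ) (x : E) : E :=
  if ‖x‖ ≤ R then x else (R / ‖x‖) • x

theorem norm_ballProj_le (hR : 0 ≤ R) (x : E) : ‖ballProj R x‖ ≤ R := by
  unfold ballProj
  split_ifs with hx
  · exact hx
  · have hx₀ : 0 < ‖x‖ := hR.trans_lt (not_le.1 hx)
    rw [norm_smul, Real.norm_of_nonneg (by positivity), div_mul_cancel₀ _ hx₀.ne']

theorem inner_sub_ballProj_nonpos (hR : 0 ≤ R) (x : E) {u : E} (hu : ‖u‖ ≤ R) :
    ⟪x - ballProj R x, u - ballProj R x⟫ ≤ 0 := by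
  unfold ballProj
  split_ifs with hx
  · simp
  · have hx₀ : 0 < ‖x‖ := hR.trans_lt (not_le.1 hx)
    have hxu : ⟪x, u⟫ ≤ ‖x‖ * R :=
      (real_inner_le_norm x u).trans (mul_le_mul_of_nonneg_left hu hx₀.le)
    rw [show x - (R / ‖x‖) • x = (1 - R / ‖x‖) • x by module]
    simp only [inner_sub_right, real_inner_smul_left, real_inner_smul_right,
      real_inner_self_eq_norm_sq]
    have hc : 0 ≤ 1 - R / ‖x‖ := sub_nonneg.2 ((div_le_one hx₀).2 (not_le.1 hx).le)
    have : R / ‖x‖ * ‖x‖ ^ 2 = R * ‖x‖ := by field_simp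
    nlinarith

theorem inner_sub_ballProj_sub_nonpos (hR : 0 ≤ R) (x : E) {u : E} (hu : ‖u‖ ≤ R) :
    ⟪x - ballProj R x, u - x⟫ ≤ 0 := by
  have := inner_sub_ballProj_nonpos hR x hu
  rw [show u - x = (u - ballProj R x) - (x - ballProj R x) by abel, inner_sub_right,
    real_inner_self_eq_norm_sq]
  nlinarith [sq_nonneg ‖x - ballProj R x‖]

theorem norm_sub_ballProj_sub_sq_le (hR : 0 ≤ R) (x y : E) :
    ‖(x - ballProj R x) - (y - ballProj R y)‖ ^ 2 ≤
      ⟪x - y, (x - ballProj R x) - (y - ballProj R y)⟫ := by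
  have hx := inner_sub_ballProj_nonpos hR x (norm_ballProj_le hR y)
  have hy := inner_sub_ballProj_nonpos hR y (norm_ballProj_le hR x)
  set a := x - ballProj R x
  set b := y - ballProj R y
  rw [← real_inner_self_eq_norm_sq, ← sub_nonneg, ← inner_sub_left,
    show x - y - (a - b) = ballProj R x - ballProj R y by simp only [a, b]; abel]
  rw [← neg_sub (ballProj R x), inner_neg_right] at hx
  rw [real_inner_comm, inner_sub_left]
  linarith

theorem norm_sub_ballProj_sub_le (hR : 0 ≤ R) (x y : E) :
    ‖(x - ballProj R x) - (y - ballProj R y)‖ ≤ ‖x - y‖ := by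
  have h := (norm_sub_ballProj_sub_sq_le hR x y).trans (real_inner_le_norm _ _)
  rcases (norm_nonneg ((x - ballProj R x) - (y - ballProj R y))).eq_or_lt with h0 | hpos
  · rw [← h0]; exact norm_nonneg _
  · nlinarith

theorem norm_le_of_tendsto_smul_sub_ballProj (hR : 0 ≤ R) {z : ℕ → E} {c : ℕ → ℝ} {z' q' : E}
    (hc : Tendsto c atTop atTop) (hz : Tendsto z atTop (𝓝 z'))
    (hq : Tendsto (fun n => c n • (z n - ballProj R (z n))) atTop (𝓝 q')) : ‖z'‖ ≤ R := by
  have hpen : Tendsto (fun n => z n - ballProj R (z n)) atTop (𝓝 0) := by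
    have h := (tendsto_inv_atTop_zero.comp hc).smul hq
    rw [zero_smul] at h
    refine h.congr' ?_
    filter_upwards [hc.eventually_gt_atTop 0] with n hn
    rw [Function.comp_apply, smul_smul, inv_mul_cancel₀ hn.ne', one_smul]
  have hcont : Continuous fun x : E => x - ballProj R x :=
    (LipschitzWith.of_dist_le_mul (K := 1) fun x y => by
      simpa [dist_eq_norm] using norm_sub_ballProj_sub_le hR x y).continuous
  rw [sub_eq_zero.1 (tendsto_nhds_unique ((hcont.tendsto z').comp hz) hpen)]
  exact norm_ballProj_le hR z'

theorem mul_norm_le_inner_of_forall_inner_sub_nonpos {q z x₀ : E}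
    (hq : ∀ u : E, ‖u‖ ≤ R → ⟪q, u - z⟫ ≤ 0) (hx₀ : ‖x₀‖ ≤ R) :
    (R - ‖x₀‖) * ‖q‖ ≤ ⟪q, z - x₀⟫ := by
  rcases eq_or_ne q 0 with rfl | hq₀
  · simp
  have hq₀' : 0 < ‖q‖ := norm_pos_iff.2 hq₀
  set t := (R - ‖x₀‖) / ‖q‖
  have ht : 0 ≤ t := div_nonneg (sub_nonneg.2 hx₀) hq₀'.le
  have hu : ‖x₀ + t • q‖ ≤ R := by
    refine (norm_add_le _ _).trans ?_
    rw [norm_smul, Real.norm_of_nonneg ht, div_mul_cancel₀ _ hq₀'.ne']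
    linarith
  have := hq _ hu
  rw [show x₀ + t • q - z = t • q - (z - x₀) by abel, inner_sub_right, real_inner_smul_right,
    real_inner_self_eq_norm_sq] at this
  have ht' : t * ‖q‖ ^ 2 = (R - ‖x₀‖) * ‖q‖ := by simp only [t]; field_simp
  linarith

end BallProjection

section Penalty

variable {E : Type*} [NormedAddCommGroup E] [InnerProductSpace ℝ E] {T : E → Set E} {R : ℝ}

theorem MonotoneOp.norm_sub_le_and_mul_norm_le (hT : MonotoneOp T) {z w q p x₀ w₀ : E}
    (hw : w ∈ T z) (hw₀ : w₀ ∈ T x₀) (hx₀ : ‖x₀‖ ≤ R)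
    (hq : ∀ u : E, ‖u‖ ≤ R → ⟪q, u - z⟫ ≤ 0) (h : z + w + q = p) :
    ‖z - x₀‖ ≤ ‖p - x₀ - w₀‖ ∧ (R - ‖x₀‖) * ‖q‖ ≤ ‖p - x₀ - w₀‖ ^ 2 := by
  have hmono := hT hw hw₀
  have hnormal := mul_norm_le_inner_of_forall_inner_sub_nonpos hq hx₀
  have hkey : ‖z - x₀‖ ^ 2 + (R - ‖x₀‖) * ‖q‖ ≤ ‖z - x₀‖ * ‖p - x₀ - w₀‖ := by
    refine le_trans ?_ (real_inner_le_norm _ _)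
    rw [show p - x₀ - w₀ = (z - x₀) + ((w - w₀) + q) by rw [← h]; abel, inner_add_right,
      inner_add_right, real_inner_self_eq_norm_sq]
    linarith [real_inner_comm q (z - x₀)]
  have hRq : 0 ≤ (R - ‖x₀‖) * ‖q‖ := mul_nonneg (sub_nonneg.2 hx₀) (norm_nonneg _)
  have hz : ‖z - x₀‖ ≤ ‖p - x₀ - w₀‖ := by
    by_contra! hlt
    nlinarith [mul_lt_mul_of_pos_left hlt ((norm_nonneg _).trans_lt hlt)]
  exact ⟨hz, by nlinarith [norm_nonneg (z - x₀)]⟩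

variable [FiniteDimensional ℝ E]

theorem MaximalMonotoneOp.exists_add_add_smul_sub_ballProj_eq (hT : MaximalMonotoneOp T)
    (hR : 0 ≤ R) {c : ℝ} (hc : 0 ≤ c) (p : E) :
    ∃ z, ∃ w ∈ T z, z + w + c • (z - ballProj R z) = p := by
  have hmax := hT.add_of_lipschitz (P := fun x => c • (x - ballProj R x)) hc
    (fun x y => by
      rw [← smul_sub, real_inner_smul_right]
      exact mul_nonneg hc ((sq_nonneg _).trans (norm_sub_ballProj_sub_sq_le hR x y)))
    (fun x y => by
      rw [← smul_sub, norm_smul, Real.norm_of_nonneg hc]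
      exact mul_le_mul_of_nonneg_left (norm_sub_ballProj_sub_le hR x y) hc)
  obtain ⟨z, _, ⟨w, hw, rfl⟩, h⟩ := hmax.exists_add_eq p
  exact ⟨z, w, hw, by rw [← h, add_assoc]⟩

end Penalty

section LocalMaximality

variable {E : Type*} [NormedAddCommGroup E] [InnerProductSpace ℝ E] [FiniteDimensional ℝ E]
  {T : E → Set E} {R : ℝ}

-- `q` is a normal vector to `closedBall 0 R` at `z`: this is the surjectivity of `I + T + N_{B_R}`.
theorem MaximalMonotoneOp.exists_add_add_eq_of_normal_closedBall
    (hT : MaximalMonotoneOp T) {x₀ w₀ : E} (hx₀ : ‖x₀‖ < R) (hw₀ : w₀ ∈ T x₀) (p : E) :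
    ∃ z, ‖z‖ ≤ R ∧ ∃ w ∈ T z, ∃ q, (∀ u : E, ‖u‖ ≤ R → ⟪q, u - z⟫ ≤ 0) ∧ z + w + q = p := by
  have hR : 0 ≤ R := (norm_nonneg _).trans hx₀.le
  choose z w hw hzw using fun n : ℕ =>
    hT.exists_add_add_smul_sub_ballProj_eq hR (c := n + 1) (by positivity) p
  set q : ℕ → E := fun n => ((n : ℝ) + 1) • (z n - ballProj R (z n))
  have hq : ∀ n, ∀ u : E, ‖u‖ ≤ R → ⟪q n, u - z n⟫ ≤ 0 := fun n u hu => by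
    rw [real_inner_smul_left]
    exact mul_nonpos_of_nonneg_of_nonpos (by positivity) (inner_sub_ballProj_sub_nonpos hR _ hu)
  have hbound n := hT.1.norm_sub_le_and_mul_norm_le (hw n) hw₀ hx₀.le (hq n) (hzw n)
  set C := ‖p - x₀ - w₀‖
  obtain ⟨⟨z', q'⟩, -, φ, hφ, hlim⟩ := tendsto_subseq_of_bounded
    (Metric.isBounded_closedBall.prod Metric.isBounded_closedBall) (x := fun n => (z n, q n))
    (s := Metric.closedBall x₀ C ×ˢ Metric.closedBall 0 (C ^ 2 / (R - ‖x₀‖))) fun n =>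
      ⟨mem_closedBall_iff_norm.2 (hbound n).1, mem_closedBall_zero_iff.2 <|
        (le_div_iff₀' (sub_pos.2 hx₀)).2 (hbound n).2⟩
  have hz : Tendsto (z ∘ φ) atTop (𝓝 z') := (continuous_fst.tendsto _).comp hlim
  have hq' : Tendsto (q ∘ φ) atTop (𝓝 q') := (continuous_snd.tendsto _).comp hlim
  have hw' : Tendsto (w ∘ φ) atTop (𝓝 (p - z' - q')) := by
    convert (tendsto_const_nhds.sub hz).sub hq' using 1
    ext n
    simp only [Function.comp_apply, ← hzw (φ n), q]
    abel
  have hz'R := norm_le_of_tendsto_smul_sub_ballProj hR (c := fun n => (φ n : ℝ) + 1)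
    (tendsto_atTop_add_const_right _ 1 (tendsto_natCast_atTop_atTop.comp hφ.tendsto_atTop))
    hz hq'
  refine ⟨z', hz'R, p - z' - q', hT.mem_of_tendsto hz hw' fun n => hw (φ n), q',
    fun u hu => le_of_tendsto' (hq'.inner (tendsto_const_nhds.sub hz)) fun n => hq (φ n) u hu,
    by abel⟩

theorem MaximalMonotoneOp.mem_of_forall_inner_nonneg (hT : MaximalMonotoneOp T) {x₀ w₀ p v : E}
    (hx₀ : ‖x₀‖ < R) (hw₀ : w₀ ∈ T x₀) (hp : ‖p‖ < R)
    (h : ∀ z : E, ‖z‖ ≤ R → ∀ w ∈ T z, 0 ≤ ⟪z - p, w - v⟫) : v ∈ T p := by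
  obtain ⟨z, hz, w, hw, q, hq, hsum⟩ :=
    hT.exists_add_add_eq_of_normal_closedBall hx₀ hw₀ (p + v)
  have hrel := h z hz w hw
  have hw' : w = p + v - z - q := by rw [← hsum]; abel
  rw [show w - v = -(z - p) + -q by rw [hw']; abel, inner_add_right,
    inner_neg_right, inner_neg_right, real_inner_self_eq_norm_sq, real_inner_comm,
    ← inner_neg_right, neg_sub] at hrel
  obtain rfl : z = p := sub_eq_zero.1 <| norm_eq_zero.1 <| by nlinarith [hq p hp.le]
  have hq₀ := mul_norm_le_inner_of_forall_inner_sub_nonpos hq hp.le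
  rw [sub_self, inner_zero_right] at hq₀
  obtain rfl : q = 0 := norm_le_zero_iff.1 <| by nlinarith [norm_nonneg q, sub_pos.2 hp]
  rwa [show v = w by rw [← add_right_inj z, ← hsum, add_zero]]

end LocalMaximality

section RestrictedGap

variable {E : Type*} [NormedAddCommGroup E] [InnerProductSpace ℝ E] {T : E → Set E} {R : ℝ}

theorem restrictedGap_le_coe_iff {p : E} {c : ℝ} :
    restrictedGap T R p ≤ c ↔ ∀ z : E, ‖z‖ ≤ R → ∀ w ∈ T z, ⟪w, p - z⟫ ≤ c := by
  simp only [restrictedGap, iSup₂_le_iff, EReal.coe_le_coe_iff, mem_closedBall_zero_iff]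

theorem coe_inner_le_restrictedGap {p z w : E} (hz : ‖z‖ ≤ R) (hw : w ∈ T z) :
    ((⟪w, p - z⟫ : ℝ) : EReal) ≤ restrictedGap T R p :=
  le_iSup₂_of_le z (mem_closedBall_zero_iff.2 hz) (le_iSup₂_of_le w hw le_rfl)

theorem restrictedGap_nonneg {z₀ : E} (hz₀ : ‖z₀‖ ≤ R) (h : (0 : E) ∈ T z₀) (p : E) :
    0 ≤ restrictedGap T R p := by
  simpa using coe_inner_le_restrictedGap (p := p) hz₀ h

theorem lowerSemicontinuous_restrictedGap : LowerSemicontinuous (restrictedGap T R) :=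
  lowerSemicontinuous_iSup fun _ => lowerSemicontinuous_iSup fun _ =>
    lowerSemicontinuous_iSup fun _ => lowerSemicontinuous_iSup fun _ =>
      (continuous_coe_real_ereal.comp (by fun_prop)).lowerSemicontinuous

theorem restrictedGap_smul_add_smul_le (p q : E) {a b : ℝ} (ha : 0 ≤ a) (hb : 0 ≤ b)
    (hab : a + b = 1) :
    restrictedGap T R (a • p + b • q) ≤
      (a : EReal) * restrictedGap T R p + (b : EReal) * restrictedGap T R q := by
  refine iSup₂_le fun z hz => iSup₂_le fun w hw => ?_
  have hz_eq : z = a • z + b • z := by rw [← add_smul, hab, one_smul]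
  rw [show a • p + b • q - z = a • (p - z) + b • (q - z) by nth_rewrite 1 [hz_eq]; module,
    inner_add_right, real_inner_smul_right, real_inner_smul_right, EReal.coe_add,
    EReal.coe_mul, EReal.coe_mul]
  have hz' := mem_closedBall_zero_iff.1 hz
  exact add_le_add
    (mul_le_mul_of_nonneg_left (coe_inner_le_restrictedGap hz' hw) (EReal.coe_nonneg.2 ha))
    (mul_le_mul_of_nonneg_left (coe_inner_le_restrictedGap hz' hw) (EReal.coe_nonneg.2 hb))

theorem MonotoneOp.restrictedGap_ne_top (hT : MonotoneOp T) {x₀ w₀ : E} (hw₀ : w₀ ∈ T x₀) :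
    restrictedGap T R x₀ ≠ ⊤ := by
  refine ne_top_of_le_ne_top (EReal.coe_ne_top (‖w₀‖ * (‖x₀‖ + R)))
    (restrictedGap_le_coe_iff.2 fun z hz w hw => ?_)
  have hmono := hT hw₀ hw
  rw [inner_sub_right, real_inner_comm w₀, real_inner_comm w] at hmono
  calc ⟪w, x₀ - z⟫ ≤ ⟪w₀, x₀ - z⟫ := by linarith
    _ ≤ ‖w₀‖ * ‖x₀ - z‖ := real_inner_le_norm _ _
    _ ≤ ‖w₀‖ * (‖x₀‖ + R) :=
      mul_le_mul_of_nonneg_left ((norm_sub_le _ _).trans (by linarith)) (norm_nonneg _)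

theorem MaximalMonotoneOp.restrictedGap_eq_zero_iff [FiniteDimensional ℝ E]
    (hT : MaximalMonotoneOp T) {x₀ w₀ p : E} (hx₀ : ‖x₀‖ < R) (hw₀ : w₀ ∈ T x₀) (hp : ‖p‖ < R) :
    restrictedGap T R p = 0 ↔ (0 : E) ∈ T p := by
  have hinner : ∀ z w : E, ⟪w, p - z⟫ = -⟪z - p, w - 0⟫ := fun z w => by
    rw [sub_zero, ← inner_neg_left, neg_sub, real_inner_comm]
  constructor
  · intro h0
    refine hT.mem_of_forall_inner_nonneg hx₀ hw₀ hp fun z hz w hw => ?_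
    have := restrictedGap_le_coe_iff.1 (h0.trans EReal.coe_zero.symm).le z hz w hw
    linarith [hinner z w]
  · intro h0
    refine le_antisymm ?_ (restrictedGap_nonneg hp.le h0 p)
    rw [← EReal.coe_zero, restrictedGap_le_coe_iff]
    intro z _ w hw
    linarith [hinner z w, hT.1 hw h0]

end RestrictedGap

theorem stmt13_general {E : Type*} [NormedAddCommGroup E] [InnerProductSpace ℝ E]
    [FiniteDimensional ℝ E]
    (T : E → Set E) (hT : MaximalMonotoneOp T) (R : ℝ)
    (hzer : ∃ z ∈ Metric.closedBall (0:E) R, (0:E) ∈ T z)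
    (hdom : ∃ x : E, (T x).Nonempty ∧ ‖x‖ < R) :
    (∀ p : E, 0 ≤ restrictedGap T R p) ∧
    LowerSemicontinuous (restrictedGap T R) ∧
    (∀ p q : E, ∀ a b : ℝ, 0 ≤ a → 0 ≤ b → a + b = 1 →
      restrictedGap T R (a • p + b • q) ≤
        (a : EReal) * restrictedGap T R p + (b : EReal) * restrictedGap T R q) ∧
    (∀ p : E, restrictedGap T R p ≠ ⊥) ∧ (∃ p : E, restrictedGap T R p ≠ ⊤) ∧
    (∀ p : E, ‖p‖ < R → (restrictedGap T R p = 0 ↔ (0:E) ∈ T p)) := by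
  obtain ⟨z₀, hz₀, h0⟩ := hzer
  obtain ⟨x₀, ⟨w₀, hw₀⟩, hx₀⟩ := hdom
  have hnonneg := restrictedGap_nonneg (mem_closedBall_zero_iff.1 hz₀) h0
  exact ⟨hnonneg, lowerSemicontinuous_restrictedGap,
    fun p q _ _ ha hb hab => restrictedGap_smul_add_smul_le p q ha hb hab,
    fun p => ne_bot_of_le_ne_bot EReal.zero_ne_bot (hnonneg p),
    ⟨x₀, hT.1.restrictedGap_ne_top hw₀⟩,
    fun _ hp => hT.restrictedGap_eq_zero_iff hx₀ hw₀ hp⟩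

/-- Nonnegativity and zero characterization of the restricted gap function: if
`T` is maximal monotone, `zer T ∩ B_R ≠ ∅` and `int B_R ∩ dom T ≠ ∅`, then `G_R`
is nonnegative, lower semicontinuous, convex and proper; moreover for any `p`
with `‖p‖ < R`, `G_R(p) = 0` if and only if `0 ∈ T p`. -/
theorem stmt13 {E : Type*} [NormedAddCommGroup E] [InnerProductSpace ℝ E]
    [FiniteDimensional ℝ E]
    (T : E → Set E) (hT : MaximalMonotoneOp T) (R : ℝ) (hR : 0 < R)
    (hzer : ∃ z ∈ Metric.closedBall (0:E) R, (0:E) ∈ T z)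
    (hdom : ∃ x : E, (T x).Nonempty ∧ ‖x‖ < R) :
    (∀ p : E, 0 ≤ restrictedGap T R p) ∧
    LowerSemicontinuous (restrictedGap T R) ∧
    (∀ p q : E, ∀ a b : ℝ, 0 ≤ a → 0 ≤ b → a + b = 1 →
      restrictedGap T R (a • p + b • q) ≤
        (a : EReal) * restrictedGap T R p + (b : EReal) * restrictedGap T R q) ∧
    (∀ p : E, restrictedGap T R p ≠ ⊥) ∧ (∃ p : E, restrictedGap T R p ≠ ⊤) ∧
    (∀ p : E, ‖p‖ < R → (restrictedGap T R p = 0 ↔ (0:E) ∈ T p)) :=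
  stmt13_general T hT R hzer hdom
end

section
/- Ergodic saddle-point bound: under the per-step bound L(sᵏ, y) − L(x, y^{k+1}) ≤ (1/σₖ)(D_Φ(z, zᵏ) − D_Φ(z, z^{k+1}) − (1−ρₖ)D_Φ(pᵏ, zᵏ)) with z = (x,y), D_Φ(z, ·) = D_ψ(x, ·) + D_φ(y, ·), and ρₖ < 1, the ergodic averages s̆ᴷ = ∑σₖsᵏ/∑σₖ and y̆ᴷ = ∑σₖy^{k+1}/∑σₖ satisfy L(s̆ᴷ, y) − L(x, y̆ᴷ) ≤ (D_ψ(x, x⁰) + D_φ(y, y⁰))/(∑_{k=0}^K σₖ) for every x ∈ dom ψ and y ∈ dom φ. -/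
open scoped RealInnerProductSpace BigOperators

/-!
Multiply the per-step bound by `σₖ` and drop the nonnegative term `(1 - ρₖ) Dₖ`: the weighted
gaps `σₖ (L(sᵏ, y) - L(x, yᵏ))` are then bounded by the decrements of `Vₖ = D_ψ(x, xᵏ) + D_φ(y, yᵏ)`,
so their sum telescopes to at most `V₀`. Jensen's inequality, for `L(·, y)` convex and `L(x, ·)`
concave, bounds the gap at the ergodic averages by the `σ`-weighted average of the gaps.
-/

open Finset

theorem Finset.sum_range_le_of_le_sub_succ {a V : ℕ → ℝ} {n : ℕ}
    (h : ∀ k ∈ range n, a k ≤ V k - V (k + 1)) (hV : 0 ≤ V n) :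
    ∑ k ∈ range n, a k ≤ V 0 := by
  have := (sum_le_sum h).trans_eq (sum_range_sub' V n)
  linarith

theorem Finset.centerMass_le_div_of_sum_mul_le {ι : Type*} {t : Finset ι} {w g : ι → ℝ} {B : ℝ}
    (hw : 0 < ∑ i ∈ t, w i) (h : ∑ i ∈ t, w i * g i ≤ B) :
    t.centerMass w g ≤ B / ∑ i ∈ t, w i := by
  rw [centerMass, div_eq_inv_mul]
  exact mul_le_mul_of_nonneg_left h (inv_nonneg.mpr hw.le)

theorem Finset.centerMass_sub {ι : Type*} (t : Finset ι) (w f g : ι → ℝ) :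
    t.centerMass w (fun i => f i - g i) = t.centerMass w f - t.centerMass w g := by
  simp only [centerMass, smul_eq_mul, mul_sub, sum_sub_distrib]

theorem saddle_gap_centerMass_le {E F ι : Type*} [AddCommGroup E] [Module ℝ E]
    [AddCommGroup F] [Module ℝ F] {L : E → F → ℝ} {S : Set E} {T : Set F} {x : E} {y : F}
    (hconv : ConvexOn ℝ S (fun x' => L x' y)) (hconc : ConcaveOn ℝ T (fun y' => L x y'))
    {t : Finset ι} {w : ι → ℝ} (hw₀ : ∀ i ∈ t, 0 ≤ w i) (hw : 0 < ∑ i ∈ t, w i)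
    {p : ι → E} {q : ι → F} (hp : ∀ i ∈ t, p i ∈ S) (hq : ∀ i ∈ t, q i ∈ T) :
    L (t.centerMass w p) y - L x (t.centerMass w q) ≤
      t.centerMass w (fun i => L (p i) y - L x (q i)) := by
  rw [centerMass_sub]
  exact sub_le_sub (hconv.map_centerMass_le hw₀ hw hp) (hconc.le_map_centerMass hw₀ hw hq)

/-- Ergodic saddle-point bound: under the per-step primal–dual gap bound
`L(sᵏ, y) − L(x, y^{k+1}) ≤ (1/σₖ)(D(z, zᵏ) − D(z, z^{k+1}) − (1−ρₖ)Dₖ)` with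
`D(z, ·) = D_ψ(x, ·) + D_φ(y, ·)` and `ρₖ < 1`, the ergodic averages
`s̆ᴷ = ∑σₖsᵏ/∑σₖ` and `y̆ᴷ = ∑σₖy^{k+1}/∑σₖ` satisfy
`L(s̆ᴷ, y) − L(x, y̆ᴷ) ≤ (D_ψ(x, x⁰) + D_φ(y, y⁰))/(∑_{k≤K} σₖ)` for every
`x ∈ dom ψ` and `y ∈ dom φ`. -/
theorem stmt16 {E F : Type*} [NormedAddCommGroup E] [InnerProductSpace ℝ E]
    [NormedAddCommGroup F] [InnerProductSpace ℝ F]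
    (L : E → F → ℝ) (Sψ : Set E) (Sφ : Set F)
    (hconv : ∀ y ∈ Sφ, ConvexOn ℝ Sψ (fun x => L x y))
    (hconc : ∀ x ∈ Sψ, ConcaveOn ℝ Sφ (fun y => L x y))
    (Dψ : E → E → ℝ) (Dφ : F → F → ℝ)
    (hDψ : ∀ u v : E, 0 ≤ Dψ u v) (hDφ : ∀ u v : F, 0 ≤ Dφ u v)
    (s xs : ℕ → E) (yv ys : ℕ → F) (σ ρ : ℕ → ℝ)
    (hσ : ∀ k, 0 < σ k) (hρ : ∀ k, ρ k < 1)
    (Dp : ℕ → ℝ) (hDp : ∀ k, 0 ≤ Dp k)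
    (hmem : ∀ k, s k ∈ Sψ ∧ yv k ∈ Sφ)
    (hstep : ∀ x ∈ Sψ, ∀ y ∈ Sφ, ∀ k : ℕ,
      L (s k) y - L x (yv k) ≤ (1 / σ k) *
        ((Dψ x (xs k) + Dφ y (ys k)) - (Dψ x (xs (k + 1)) + Dφ y (ys (k + 1))) -
          (1 - ρ k) * Dp k))
    (K : ℕ) :
    ∀ x ∈ Sψ, ∀ y ∈ Sφ,
      L ((∑ k ∈ Finset.range (K + 1), σ k)⁻¹ •
            ∑ k ∈ Finset.range (K + 1), σ k • s k) y -
        L x ((∑ k ∈ Finset.range (K + 1), σ k)⁻¹ •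
            ∑ k ∈ Finset.range (K + 1), σ k • yv k) ≤
        (Dψ x (xs 0) + Dφ y (ys 0)) / ∑ k ∈ Finset.range (K + 1), σ k := by
  intro x hx y hy
  have hS : 0 < ∑ k ∈ range (K + 1), σ k := sum_pos (fun k _ => hσ k) nonempty_range_add_one
  have hweighted : ∀ k ∈ range (K + 1), σ k * (L (s k) y - L x (yv k)) ≤
      (Dψ x (xs k) + Dφ y (ys k)) - (Dψ x (xs (k + 1)) + Dφ y (ys (k + 1))) := by
    intro k _
    have h := hstep x hx y hy k
    rw [one_div, ← div_eq_inv_mul, le_div_iff₀ (hσ k)] at h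
    linarith [mul_nonneg (sub_nonneg.mpr (hρ k).le) (hDp k)]
  have hsum := sum_range_le_of_le_sub_succ hweighted (add_nonneg (hDψ x _) (hDφ y _))
  exact (saddle_gap_centerMass_le (hconv y hy) (hconc x hx) (fun k _ => (hσ k).le) hS
    (fun k _ => (hmem k).1) (fun k _ => (hmem k).2)).trans
    (centerMass_le_div_of_sum_mul_le hS hsum)
end
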